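/- arXiv:1602.00499 — 2 statements merged into one kernel-verified Lean document; each statement's English description precedes it below -/
import Mathlib

section
/- For μ, Δ > 0 and 0 < α < 1 and Var(Λ) > 0, the scaled variance Var(M^{(N)}) = N·E[Λ]/μ + N²·((1 - e^{-μΔN^{-α}})/(1 + e^{-μΔN^{-α}}))·Var(Λ)/μ² satisfies Var(M^{(N)})/N^{2-α} → Δ·Var(Λ)/(2μ) as N → ∞. -/
/-!
With `t = N^{-α}`, the overdispersion term divided by `N^{2-α}` is `(Var Λ/μ²) · f(t)/t` for
`f(t) = (1 - e^{-μΔt})/(1 + e^{-μΔt})`. Since `f(0) = 0`, this is a difference quotient of `f` at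
`0`, so it tends to `f'(0) = μΔ/2`. The first term divided by `N^{2-α}` is `(E Λ/μ) · N^{α-1}`,
which vanishes because `α < 1`.
-/

open Real Filter Topology

theorem hasDerivAt_one_sub_exp_div_one_add_exp (c : ℝ) :
    HasDerivAt (fun t => (1 - exp (-(c * t))) / (1 + exp (-(c * t)))) (c / 2) 0 := by
  have hexp : HasDerivAt (fun t => exp (-(c * t))) (-c) 0 := by
    simpa using ((hasDerivAt_id (0 : ℝ)).const_mul c).neg.exp
  refine ((hexp.const_sub 1).fun_div (hexp.const_add 1) (by positivity)).congr_deriv ?_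
  norm_num
  ring

theorem tendsto_natCast_rpow_neg_nhdsGT {α : ℝ} (hα : 0 < α) :
    Tendsto (fun N : ℕ => (N : ℝ) ^ (-α)) atTop (𝓝[>] 0) := by
  refine tendsto_nhdsWithin_iff.mpr ⟨(tendsto_rpow_neg_atTop hα).comp tendsto_natCast_atTop_atTop, ?_⟩
  filter_upwards [eventually_ge_atTop 1] with N hN
  exact rpow_pos_of_pos (by exact_mod_cast hN) _

theorem tendsto_rpow_mul_comp_rpow_neg {f : ℝ → ℝ} {f' α : ℝ} (hα : 0 < α)
    (hf : HasDerivAt f f' 0) (hf0 : f 0 = 0) :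
    Tendsto (fun N : ℕ => (N : ℝ) ^ α * f ((N : ℝ) ^ (-α))) atTop (𝓝 f') := by
  refine (hf.tendsto_slope_zero_right.comp (tendsto_natCast_rpow_neg_nhdsGT hα)).congr' ?_
  filter_upwards [eventually_ge_atTop 1] with N hN
  simp [hf0, rpow_neg (Nat.cast_nonneg N)]

theorem tendsto_natCast_rpow_sub_one {α : ℝ} (hα : α < 1) :
    Tendsto (fun N : ℕ => (N : ℝ) ^ (α - 1)) atTop (𝓝 0) := by
  simpa [Function.comp_def, neg_sub] using
    (tendsto_rpow_neg_atTop (sub_pos.mpr hα)).comp tendsto_natCast_atTop_atTop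

theorem variance_trichotomy_slow_general
    (μ Δ α : ℝ) (hμ : 0 < μ) (hα0 : 0 < α) (hα1 : α < 1)
    (EΛ VarΛ : ℝ)
    (VarM : ℕ → ℝ)
    (hVarM : ∀ N : ℕ, VarM N =
        (N : ℝ) * EΛ / μ +
        (N : ℝ) ^ 2 * ((1 - Real.exp (-(μ * Δ * (N : ℝ) ^ (-α)))) /
          (1 + Real.exp (-(μ * Δ * (N : ℝ) ^ (-α))))) * VarΛ / μ ^ 2) :
    Tendsto (fun N : ℕ => VarM N / (N : ℝ) ^ ((2 : ℝ) - α)) atTop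
      (nhds (Δ * VarΛ / (2 * μ))) := by
  have hlim := ((tendsto_natCast_rpow_sub_one hα1).const_mul (EΛ / μ)).add
    ((tendsto_rpow_mul_comp_rpow_neg hα0 (hasDerivAt_one_sub_exp_div_one_add_exp (μ * Δ))
      (by simp)).const_mul (VarΛ / μ ^ 2))
  have hval : EΛ / μ * 0 + VarΛ / μ ^ 2 * (μ * Δ / 2) = Δ * VarΛ / (2 * μ) := by
    field_simp
    ring
  rw [hval] at hlim
  refine hlim.congr' ?_
  filter_upwards [eventually_ge_atTop 1] with N hN
  have hN : (0 : ℝ) < N := by exact_mod_cast hN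
  rw [hVarM, rpow_sub_one hN.ne', rpow_sub hN, rpow_two]
  field_simp

/-- slow regime, `0 < α < 1`: `Var(M^{(N)})/N^{2-α} → Δ·Var(Λ)/(2μ)`. -/
theorem variance_trichotomy_slow
    (μ Δ α : ℝ) (hμ : 0 < μ) (hΔ : 0 < Δ) (hα0 : 0 < α) (hα1 : α < 1)
    (EΛ VarΛ : ℝ) (hEΛ : 0 ≤ EΛ) (hVarΛ : 0 < VarΛ)
    (VarM : ℕ → ℝ)
    (hVarM : ∀ N : ℕ, VarM N =
        (N : ℝ) * EΛ / μ +
        (N : ℝ) ^ 2 * ((1 - Real.exp (-(μ * Δ * (N : ℝ) ^ (-α)))) /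
          (1 + Real.exp (-(μ * Δ * (N : ℝ) ^ (-α))))) * VarΛ / μ ^ 2) :
    Tendsto (fun N : ℕ => VarM N / (N : ℝ) ^ ((2 : ℝ) - α)) atTop
      (nhds (Δ * VarΛ / (2 * μ))) :=
  variance_trichotomy_slow_general μ Δ α hμ hα0 hα1 EΛ VarΛ VarM hVarM
end

section
/- Let φ: [0,1] → ℝ satisfy the functional equation φ(z) = φ(zp + (1-p))·g(z) for all z ∈ [0,1], where 0 < p < 1, g is continuous with g(1) = 1, and φ is continuous with φ(1) = 1. Then φ(z) = Π_{k=0}^∞ g(1 - (1-z)p^k), with the infinite product converging whenever g is the Laplace-type transform g(z) = E[exp(-Λ r (1-z))] for a non-negative integrable random variable Λ and r > 0. -/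
/-!
Iterating the functional equation along the orbit `w_k = 1 - (1 - z) p ^ k` of the affine map
`w ↦ w p + (1 - p)` gives `φ z = φ (w_n) · ∏_{k < n} g (w_k)`. Since `w_n → 1` and `φ` is continuous
at `1` with `φ 1 = 1`, the partial products tend to `φ z`. For the Laplace-type transform,
`0 ≤ 1 - g (w_k) ≤ r (1 - z) p ^ k E[Λ]` by `1 - y ≤ e^{-y} ≤ 1`, so the product converges.
-/

open MeasureTheory Real Filter Topology Set Finset

section FunctionalEquation

variable {φ g : ℝ → ℝ} {p z : ℝ}

lemma one_sub_mul_pow_mem_Icc (hz : z ∈ Icc (0 : ℝ) 1) (hp0 : 0 ≤ p) (hp1 : p ≤ 1) (k : ℕ) :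
    1 - (1 - z) * p ^ k ∈ Icc (0 : ℝ) 1 := by
  have hpk0 : 0 ≤ p ^ k := pow_nonneg hp0 k
  have hpk1 : p ^ k ≤ 1 := pow_le_one₀ hp0 hp1
  constructor <;> nlinarith [hz.1, hz.2]

lemma eq_mul_prod_range_of_functional_eq
    (hfe : ∀ z ∈ Icc (0 : ℝ) 1, φ z = φ (z * p + (1 - p)) * g z)
    (hp0 : 0 ≤ p) (hp1 : p ≤ 1) (hz : z ∈ Icc (0 : ℝ) 1) (n : ℕ) :
    φ z = φ (1 - (1 - z) * p ^ n) * ∏ k ∈ range n, g (1 - (1 - z) * p ^ k) := by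
  induction n with
  | zero => simp
  | succ n ih =>
    have hstep := hfe _ (one_sub_mul_pow_mem_Icc hz hp0 hp1 n)
    rw [show (1 - (1 - z) * p ^ n) * p + (1 - p) = 1 - (1 - z) * p ^ (n + 1) by ring] at hstep
    rw [ih, hstep, prod_range_succ]
    ring

lemma tendsto_prod_range_of_functional_eq
    (hfe : ∀ z ∈ Icc (0 : ℝ) 1, φ z = φ (z * p + (1 - p)) * g z)
    (hcont : ContinuousWithinAt φ (Icc 0 1) 1) (hφ1 : φ 1 = 1)
    (hp0 : 0 ≤ p) (hp1 : p < 1) (hz : z ∈ Icc (0 : ℝ) 1) :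
    Tendsto (fun n => ∏ k ∈ range n, g (1 - (1 - z) * p ^ k)) atTop (𝓝 (φ z)) := by
  have horbit : Tendsto (fun n : ℕ => 1 - (1 - z) * p ^ n) atTop (𝓝[Icc 0 1] 1) := by
    refine tendsto_nhdsWithin_iff.mpr ⟨?_, .of_forall (one_sub_mul_pow_mem_Icc hz hp0 hp1.le)⟩
    simpa using ((tendsto_pow_atTop_nhds_zero_of_lt_one hp0 hp1).const_mul (1 - z)).const_sub 1
  have hφorbit : Tendsto (fun n : ℕ => φ (1 - (1 - z) * p ^ n)) atTop (𝓝 1) := by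
    simpa only [hφ1, Function.comp_def] using hcont.tendsto.comp horbit
  have hquot := (tendsto_const_nhds (x := φ z)).div hφorbit one_ne_zero
  rw [div_one] at hquot
  refine hquot.congr' ?_
  filter_upwards [hφorbit.eventually_ne one_ne_zero] with n hn
  rw [Pi.div_apply, eq_mul_prod_range_of_functional_eq hfe hp0 hp1.le hz n,
    mul_div_cancel_left₀ _ hn]

lemma eq_tprod_of_functional_eq
    (hfe : ∀ z ∈ Icc (0 : ℝ) 1, φ z = φ (z * p + (1 - p)) * g z)
    (hcont : ContinuousWithinAt φ (Icc 0 1) 1) (hφ1 : φ 1 = 1)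
    (hp0 : 0 ≤ p) (hp1 : p < 1) (hz : z ∈ Icc (0 : ℝ) 1)
    (hmul : Multipliable fun k : ℕ => g (1 - (1 - z) * p ^ k)) :
    φ z = ∏' k : ℕ, g (1 - (1 - z) * p ^ k) :=
  tendsto_nhds_unique (tendsto_prod_range_of_functional_eq hfe hcont hφ1 hp0 hp1 hz)
    hmul.hasProd.tendsto_prod_nat

end FunctionalEquation

section LaplaceTransform

variable {ν : Measure ℝ} {t : ℝ}

lemma integrable_exp_neg_mul [IsFiniteMeasure ν] (hnn : ∀ᵐ x ∂ν, 0 ≤ x) (ht : 0 ≤ t) :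
    Integrable (fun x => exp (-(x * t))) ν := by
  refine (integrable_const 1).mono' (by fun_prop) ?_
  filter_upwards [hnn] with x hx
  rw [norm_of_nonneg (exp_pos _).le, exp_le_one_iff, neg_nonpos]
  exact mul_nonneg hx ht

lemma integral_exp_neg_mul_le_one [IsProbabilityMeasure ν] (hnn : ∀ᵐ x ∂ν, 0 ≤ x)
    (ht : 0 ≤ t) : ∫ x, exp (-(x * t)) ∂ν ≤ 1 := by
  calc ∫ x, exp (-(x * t)) ∂ν ≤ ∫ _, (1 : ℝ) ∂ν := by
        refine integral_mono_ae (integrable_exp_neg_mul hnn ht) (integrable_const 1) ?_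
        filter_upwards [hnn] with x hx
        rw [exp_le_one_iff, neg_nonpos]
        exact mul_nonneg hx ht
    _ = 1 := by simp

lemma one_sub_mul_integral_le_integral_exp_neg_mul [IsProbabilityMeasure ν]
    (hnn : ∀ᵐ x ∂ν, 0 ≤ x) (hint : Integrable (fun x => x) ν) (ht : 0 ≤ t) :
    1 - t * ∫ x, x ∂ν ≤ ∫ x, exp (-(x * t)) ∂ν := by
  calc 1 - t * ∫ x, x ∂ν = ∫ x, (1 - x * t) ∂ν := by
        rw [integral_sub (integrable_const 1) (hint.mul_const t), integral_mul_const]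
        simp [mul_comm]
    _ ≤ ∫ x, exp (-(x * t)) ∂ν := by
        refine integral_mono ((integrable_const 1).sub (hint.mul_const t))
          (integrable_exp_neg_mul hnn ht) fun x => ?_
        linarith [add_one_le_exp (-(x * t))]

lemma abs_integral_exp_neg_mul_sub_one_le [IsProbabilityMeasure ν] (hnn : ∀ᵐ x ∂ν, 0 ≤ x)
    (hint : Integrable (fun x => x) ν) (ht : 0 ≤ t) :
    |∫ x, exp (-(x * t)) ∂ν - 1| ≤ t * ∫ x, x ∂ν := by
  rw [abs_of_nonpos (sub_nonpos.mpr (integral_exp_neg_mul_le_one hnn ht))]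
  linarith [one_sub_mul_integral_le_integral_exp_neg_mul hnn hint ht]

lemma summable_integral_exp_neg_mul_pow_sub_one [IsProbabilityMeasure ν]
    (hnn : ∀ᵐ x ∂ν, 0 ≤ x) (hint : Integrable (fun x => x) ν) {c p : ℝ} (hc : 0 ≤ c)
    (hp0 : 0 ≤ p) (hp1 : p < 1) :
    Summable fun k : ℕ => ∫ x, exp (-(x * (c * p ^ k))) ∂ν - 1 := by
  refine Summable.of_norm_bounded
    ((summable_geometric_of_lt_one hp0 hp1).mul_left (c * ∫ x, x ∂ν)) fun k => ?_
  rw [norm_eq_abs, mul_right_comm]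
  exact abs_integral_exp_neg_mul_sub_one_le hnn hint (mul_nonneg hc (pow_nonneg hp0 k))

end LaplaceTransform

/-- iteration of the functional equation
`φ(z) = φ(zp + (1-p))·g(z)` yields the infinite product representation
`φ(z) = Π_{k≥0} g(1 - (1-z)p^k)`, where `g` is the Laplace-type transform
`g(z) = E[exp(-Λ r (1-z))]` of a non-negative integrable random variable `Λ`
(with law `ν`) and `r > 0`. -/
theorem pgf_infinite_product
    (ν : Measure ℝ) [IsProbabilityMeasure ν] (hnn : ∀ᵐ x ∂ν, 0 ≤ x)
    (hint : Integrable (fun x => x) ν)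
    (r p : ℝ) (hr : 0 < r) (hp0 : 0 < p) (hp1 : p < 1)
    (φ g : ℝ → ℝ)
    (hg : ∀ z, g z = ∫ x, Real.exp (-(x * r * (1 - z))) ∂ν)
    (hφcont : ContinuousOn φ (Set.Icc 0 1)) (hφ1 : φ 1 = 1)
    (hfe : ∀ z ∈ Set.Icc (0 : ℝ) 1, φ z = φ (z * p + (1 - p)) * g z) :
    ∀ z ∈ Set.Icc (0 : ℝ) 1,
      Multipliable (fun k : ℕ => g (1 - (1 - z) * p ^ k)) ∧
      φ z = ∏' k : ℕ, g (1 - (1 - z) * p ^ k) := by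
  intro z hz
  have hc : 0 ≤ r * (1 - z) := mul_nonneg hr.le (sub_nonneg.mpr hz.2)
  have hmul : Multipliable fun k : ℕ => g (1 - (1 - z) * p ^ k) := by
    refine (Real.multipliable_one_add_of_summable
      (summable_integral_exp_neg_mul_pow_sub_one hnn hint hc hp0.le hp1)).congr fun k => ?_
    rw [add_sub_cancel, hg]
    congr 1 with x
    ring_nf
  exact ⟨hmul, eq_tprod_of_functional_eq hfe (hφcont 1 ⟨zero_le_one, le_rfl⟩) hφ1 hp0.le hp1 hz
    hmul⟩
end
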